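/- Let F be a field of characteristic 0 and q ≥ 1. For all g, h : Fin q → ZMod 2 × ZMod 2, the matrix c_g · c_h + c_h · c_gᵀ is either the zero matrix or an invertible matrix in M_{2^q}(F). -/

import Mathlib

open Matrix

def sigmaP (F : Type*) [Field F] (u : ZMod 2 × ZMod 2) : Matrix (Fin 2) (Fin 2) F :=
  if u = (0, 0) then !![1, 0; 0, 1]
  else if u = (1, 0) then !![1, 0; 0, -1]
  else if u = (0, 1) then !![0, 1; 1, 0]
  else !![0, 1; -1, 0]

def pauliKron (F : Type*) [Field F] : {q : ℕ} → (Fin q → ZMod 2 × ZMod 2) →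
    Matrix (Fin (2 ^ q)) (Fin (2 ^ q)) F
  | 0, _ => 1
  | q + 1, g =>
      Matrix.reindex (finProdFinEquiv.trans (finCongr (pow_succ 2 q).symm))
        (finProdFinEquiv.trans (finCongr (pow_succ 2 q).symm))
        (Matrix.kroneckerMap (· * ·) (pauliKron F (fun i => g i.castSucc))
          (sigmaP F (g (Fin.last q))))

/-!
Write `σ_(a,b) = Zᵃ Xᵇ` with `Z = σ_(1,0)`, `X = σ_(0,1)`; since `X Z = -Z X`, products and
transposes of the `σ_u` are again `σ`'s up to a sign, and by multiplicativity of the Kronecker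
product the same holds for the strings `c_g`. Hence `c_g c_h + c_h c_gᵀ = (±1 ± 1) c_(g+h)`,
a scalar multiple of a matrix that is invertible because `c_k c_k = ±1`.
-/

open Kronecker

theorem smul_eq_zero_or_isUnit_smul {K A : Type*} [Field K] [Ring A] [Algebra K A]
    (c : K) {u : A} (hu : IsUnit u) : c • u = 0 ∨ IsUnit (c • u) := by
  rcases eq_or_ne c 0 with hc | hc
  · exact Or.inl (by rw [hc, zero_smul])
  · rw [Algebra.smul_def]
    exact Or.inr ((hc.isUnit.map (algebraMap K A)).mul hu)

section

variable {F : Type*} [Field F]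

theorem sigmaP_zero : sigmaP F 0 = 1 := by
  simp (config := {decide := true}) [sigmaP, one_fin_two]

theorem sigmaP_mul_sigmaP (u v : ZMod 2 × ZMod 2) :
    sigmaP F u * sigmaP F v = ((-1) ^ (u.2.val * v.1.val) : ℤˣ) • sigmaP F (u + v) := by
  obtain ⟨a, b⟩ := u
  obtain ⟨c, d⟩ := v
  fin_cases a <;> fin_cases b <;> fin_cases c <;> fin_cases d <;>
    simp (config := {decide := true}) [sigmaP, Units.smul_def, smul_of]

theorem sigmaP_transpose (u : ZMod 2 × ZMod 2) :
    (sigmaP F u)ᵀ = ((-1) ^ (u.1.val * u.2.val) : ℤˣ) • sigmaP F u := by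
  obtain ⟨a, b⟩ := u
  fin_cases a <;> fin_cases b <;> ext i j <;> fin_cases i <;> fin_cases j <;>
    simp (config := {decide := true}) [sigmaP, Units.smul_def]

theorem pauliKron_succ {q : ℕ} (g : Fin (q + 1) → ZMod 2 × ZMod 2) :
    pauliKron F g =
      reindex (finProdFinEquiv.trans (finCongr (pow_succ 2 q).symm))
        (finProdFinEquiv.trans (finCongr (pow_succ 2 q).symm))
        (pauliKron F (fun i => g i.castSucc) ⊗ₖ sigmaP F (g (Fin.last q))) :=
  rfl

theorem pauliKron_zero {q : ℕ} : pauliKron F (0 : Fin q → ZMod 2 × ZMod 2) = 1 := by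
  induction q with
  | zero => rfl
  | succ q ih =>
    simp only [pauliKron_succ, Pi.zero_apply, ← Pi.zero_def, ih, sigmaP_zero, one_kronecker_one,
      reindex_apply, submatrix_one_equiv]

theorem pauliKron_mul_pauliKron {q : ℕ} (g h : Fin q → ZMod 2 × ZMod 2) :
    ∃ s : ℤˣ, pauliKron F g * pauliKron F h = s • pauliKron F (g + h) := by
  induction q with
  | zero => exact ⟨1, by simp [pauliKron]⟩
  | succ q ih =>
    obtain ⟨s, hs⟩ := ih (fun i => g i.castSucc) (fun i => h i.castSucc)
    refine ⟨s * (-1) ^ ((g (Fin.last q)).2.val * (h (Fin.last q)).1.val), ?_⟩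
    rw [pauliKron_succ, pauliKron_succ, pauliKron_succ, reindex_apply, reindex_apply,
      reindex_apply, submatrix_mul_equiv, ← mul_kronecker_mul, hs, sigmaP_mul_sigmaP,
      smul_kronecker, kronecker_smul, smul_smul, submatrix_smul]
    rfl

theorem pauliKron_transpose {q : ℕ} (g : Fin q → ZMod 2 × ZMod 2) :
    ∃ s : ℤˣ, (pauliKron F g)ᵀ = s • pauliKron F g := by
  induction q with
  | zero => exact ⟨1, by simp [pauliKron]⟩
  | succ q ih =>
    obtain ⟨s, hs⟩ := ih (fun i => g i.castSucc)
    refine ⟨s * (-1) ^ ((g (Fin.last q)).1.val * (g (Fin.last q)).2.val), ?_⟩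
    rw [pauliKron_succ, reindex_apply, transpose_submatrix, ← kroneckerMap_transpose, hs,
      sigmaP_transpose, smul_kronecker, kronecker_smul, smul_smul, submatrix_smul]
    rfl

theorem pauliKron_isUnit {q : ℕ} (g : Fin q → ZMod 2 × ZMod 2) : IsUnit (pauliKron F g) := by
  obtain ⟨s, hs⟩ := pauliKron_mul_pauliKron (F := F) g g
  have hgg : g + g = 0 := funext fun i => CharTwo.add_self_eq_zero (g i)
  rw [hgg, pauliKron_zero] at hs
  refine isUnit_iff_exists.2 ⟨s • pauliKron F g, ?_, ?_⟩
  · rw [mul_smul_comm, hs, smul_smul, Int.units_mul_self, one_smul]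
  · rw [smul_mul_assoc, hs, smul_smul, Int.units_mul_self, one_smul]

end

theorem pauliKron_anticomm_zero_or_isUnit_general (F : Type*) [Field F]
    (q : ℕ) (g h : Fin q → ZMod 2 × ZMod 2) :
    pauliKron F g * pauliKron F h + pauliKron F h * (pauliKron F g)ᵀ = 0 ∨
    IsUnit (pauliKron F g * pauliKron F h + pauliKron F h * (pauliKron F g)ᵀ) := by
  obtain ⟨s, hgh⟩ := pauliKron_mul_pauliKron (F := F) g h
  obtain ⟨t, hhg⟩ := pauliKron_mul_pauliKron (F := F) h g
  obtain ⟨r, hg⟩ := pauliKron_transpose (F := F) g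
  have hsum : pauliKron F g * pauliKron F h + pauliKron F h * (pauliKron F g)ᵀ =
      ((s + r * t : ℤ) : F) • pauliKron F (g + h) := by
    rw [hg, mul_smul_comm, hgh, hhg, add_comm h g, smul_smul, Int.cast_smul_eq_zsmul,
      add_smul, Units.smul_def, Units.smul_def, Units.val_mul]
  rw [hsum]
  exact smul_eq_zero_or_isUnit_smul _ (pauliKron_isUnit _)

/-- The "super-anticommutator-type" expression `c_g·c_h + c_h·c_gᵀ` is either zero or
invertible in `M_{2^q}(F)`. -/
theorem pauliKron_anticomm_zero_or_isUnit (F : Type*) [Field F] [CharZero F]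
    (q : ℕ) (hq : 1 ≤ q) (g h : Fin q → ZMod 2 × ZMod 2) :
    pauliKron F g * pauliKron F h + pauliKron F h * (pauliKron F g)ᵀ = 0 ∨
    IsUnit (pauliKron F g * pauliKron F h + pauliKron F h * (pauliKron F g)ᵀ) :=
  pauliKron_anticomm_zero_or_isUnit_general F q g h
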